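/- Let u, v ∈ F^N each have pairwise distinct coordinates over a field F, let c_0,...,c_{N-1} ∈ F be nonzero, and let h_c[u v^T] = Σ_{j=0}^{N-1} c_j (u v^T)^{∘j}. Then h_c[u v^T] is invertible and (v^{∘M})^T h_c[u v^T]^{-1} u^{∘M} = Σ_{j=0}^{N-1} s_{μ(M,N,j)}(u) s_{μ(M,N,j)}(v) / c_j for all M ≥ N. -/

import Mathlib

/-!
Write `h_c[u vᵀ] = V(u) diag(c) V(v)ᵀ` with the Vandermonde matrices `V(x) = (x_i ^ j)`. The
quadratic form becomes `∑_j w_j(v) w_j(u) / c_j` with `w(x) = V(x)⁻¹ x^{∘M}`. By Cramer's rule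
`w_j(x)` is `det V(x)⁻¹` times the determinant of `V(x)` with column `j` replaced by `x^{∘M}`; up
to a row permutation this is the alternant `a_{μ+δ}(x)` of the hook `μ = μ(M,N,j)`. The
bialternant formula `s_μ a_δ = a_{μ+δ}` follows from the Jacobi–Trudi definition of `s_μ` and
`∏_{i ≠ k} (1 - x_i t) · ∑ₙ hₙ(x) tⁿ = 1 / (1 - x_k t)`. Hence `w_j(x) = ± s_μ(x)` with a sign
depending only on `N` and `j`, which cancels in `w_j(v) w_j(u)`.
-/

open Matrix BigOperators

/-- Complete homogeneous symmetric polynomial `h_k`, as a function of a point `x ∈ F^N`. -/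
def hfun {F : Type*} [CommRing F] {N : ℕ} (x : Fin N → F) (k : ℕ) : F :=
  ∑ d ∈ Finset.univ.filter (fun d : Fin N → Fin (k + 1) => ∑ i, (d i : ℕ) = k),
    ∏ i, x i ^ (d i : ℕ)

/-- Schur polynomial (via the Jacobi–Trudi identity) of the partition `lam`,
evaluated at the point `x ∈ F^N`. -/
def schurAt {F : Type*} [CommRing F] {N : ℕ} (x : Fin N → F) (lam : Fin N → ℕ) : F :=
  Matrix.det (Matrix.of fun i j : Fin N =>
    if (i : ℕ) ≤ lam i + (j : ℕ) then hfun x (lam i + (j : ℕ) - (i : ℕ)) else 0)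

/-- The hook partition `μ(M,N,j) = (M-N+1, 1^{N-j-1}, 0^j)`. -/
def hookP (M N j : ℕ) : Fin N → ℕ :=
  fun i => if (i : ℕ) = 0 then M - N + 1 else if (i : ℕ) < N - j then 1 else 0

/-- Vandermonde determinant `Δ_N(x) = ∏_{i<j} (x_i - x_j)`. -/
def vdm {F : Type*} [CommRing F] {N : ℕ} (x : Fin N → F) : F :=
  ∏ i : Fin N, ∏ j ∈ Finset.Ioi i, (x i - x j)

section JacobiTrudi

variable {R : Type*} [CommRing R] {N : ℕ}

theorem hfun_zero (x : Fin N → R) : hfun x 0 = 1 := by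
  rw [hfun, Finset.filter_true_of_mem fun d _ => by simp [Fin.fin_one_eq_zero]]
  simp

theorem mk_hfun (x : Fin N → R) :
    PowerSeries.mk (hfun x) = ∏ i, PowerSeries.rescale (x i) (PowerSeries.mk 1) := by
  ext k
  have hle : ∀ l ∈ Finset.finsuppAntidiag (Finset.univ : Finset (Fin N)) k, ∀ i, l i ≤ k :=
    fun l hl i => (Finset.mem_finsuppAntidiag.1 hl).1 ▸
      Finset.single_le_sum (fun _ _ => Nat.zero_le _) (Finset.mem_univ i)
  rw [PowerSeries.coeff_mk, PowerSeries.coeff_prod, hfun]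
  refine Finset.sum_nbij' (fun d => Finsupp.equivFunOnFinite.symm fun i => (d i : ℕ))
    (fun l i => ⟨min (l i) k, by omega⟩) (fun d hd => ?_) (fun l hl => ?_) (fun d _ => ?_)
    (fun l hl => ?_) (fun d _ => ?_)
  · simp only [Finset.mem_filter, Finset.mem_univ, true_and] at hd
    simpa [Finsupp.sum] using hd
  · simp only [Finset.mem_filter, Finset.mem_univ, true_and, min_eq_left (hle l hl _)]
    exact (Finset.mem_finsuppAntidiag.1 hl).1
  · funext i
    ext
    simp [min_eq_left (Nat.lt_succ_iff.1 (d i).isLt)]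
  · ext i
    simp [min_eq_left (hle l hl i)]
  · simp

theorem one_sub_C_mul_X_mul_rescale_mk_one (a : R) :
    (1 - PowerSeries.C a * PowerSeries.X) * PowerSeries.rescale a (PowerSeries.mk 1) = 1 := by
  have h := congrArg (PowerSeries.rescale a) (PowerSeries.mk_one_mul_one_sub_eq_one (S := R))
  rwa [map_mul, map_sub, map_one, PowerSeries.rescale_X, mul_comm] at h

/-- `E_k(t) = ∏_{i ≠ k} (1 - x_i t)`. Since `E_k(t) ∑ₙ hₙ(x) tⁿ = 1 / (1 - x_k t)`, the matrix of
coefficients of the `E_k` carries the Jacobi–Trudi matrix to the alternant. -/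
noncomputable def elemPolyErase (x : Fin N → R) (k : Fin N) : Polynomial R :=
  ∏ i ∈ Finset.univ.erase k, (1 - Polynomial.C (x i) * Polynomial.X)

theorem natDegree_elemPolyErase_lt (x : Fin N → R) (k : Fin N) :
    (elemPolyErase x k).natDegree < N := by
  have hdeg : ∀ i, (1 - Polynomial.C (x i) * Polynomial.X).natDegree ≤ 1 := fun i => by
    compute_degree
  calc (elemPolyErase x k).natDegree
      ≤ ∑ i ∈ Finset.univ.erase k, 1 :=
        (Polynomial.natDegree_prod_le _ _).trans (Finset.sum_le_sum fun i _ => hdeg i)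
    _ < N := by simpa using k.pos

theorem coe_elemPolyErase_mul_mk_hfun (x : Fin N → R) (k : Fin N) :
    (elemPolyErase x k : PowerSeries R) * PowerSeries.mk (hfun x) =
      PowerSeries.rescale (x k) (PowerSeries.mk 1) := by
  rw [mk_hfun, ← Finset.prod_erase_mul _ _ (Finset.mem_univ k), ← mul_assoc, elemPolyErase,
    ← Polynomial.coeToPowerSeries.ringHom_apply, map_prod, ← Finset.prod_mul_distrib]
  simp [Polynomial.coeToPowerSeries.ringHom_apply, one_sub_C_mul_X_mul_rescale_mk_one]

theorem sum_coeff_elemPolyErase_mul_hfun (x : Fin N → R) (k : Fin N) (α : ℕ) :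
    ∑ a ∈ Finset.range N, (if a ≤ α then (elemPolyErase x k).coeff a * hfun x (α - a) else 0)
      = x k ^ α := by
  have hcoeff := congrArg (PowerSeries.coeff α) (coe_elemPolyErase_mul_mk_hfun x k)
  rw [PowerSeries.coeff_mul, Finset.Nat.sum_antidiagonal_eq_sum_range_succ
    (fun a b => PowerSeries.coeff a (elemPolyErase x k : PowerSeries R) *
      PowerSeries.coeff b (PowerSeries.mk (hfun x)))] at hcoeff
  simp only [Polynomial.coeff_coe, PowerSeries.coeff_mk, PowerSeries.coeff_rescale,
    Pi.one_apply, mul_one] at hcoeff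
  rw [← hcoeff, ← Finset.sum_filter]
  refine Finset.sum_subset (fun a ha => ?_) fun a ha hna => ?_
  · simp only [Finset.mem_filter] at ha
    exact Finset.mem_range.2 (Nat.lt_succ_of_le ha.2)
  · have hNa : N ≤ a := by
      simp only [Finset.mem_filter, Finset.mem_range, not_and, not_le] at ha hna
      omega
    rw [Polynomial.coeff_eq_zero_of_natDegree_lt
      ((natDegree_elemPolyErase_lt x k).trans_le hNa), zero_mul]

def jacobiTrudi (x : Fin N → R) (lam : Fin N → ℕ) : Matrix (Fin N) (Fin N) R :=
  of fun i j => if (i : ℕ) ≤ lam i + j then hfun x (lam i + j - i) else 0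

theorem schurAt_eq_det_jacobiTrudi (x : Fin N → R) (lam : Fin N → ℕ) :
    schurAt x lam = (jacobiTrudi x lam).det := rfl

/-- The matrix of the alternant `a_{λ+δ}(x)`. -/
def alternant (x : Fin N → R) (lam : Fin N → ℕ) : Matrix (Fin N) (Fin N) R :=
  of fun i k => x k ^ (lam i + (N - 1) - i)

noncomputable def elemCoeffMatrix (x : Fin N → R) : Matrix (Fin N) (Fin N) R :=
  of fun j k => (elemPolyErase x k).coeff (N - 1 - j)

theorem jacobiTrudi_mul_elemCoeffMatrix (x : Fin N → R) (lam : Fin N → ℕ) :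
    jacobiTrudi x lam * elemCoeffMatrix x = alternant x lam := by
  ext i k
  have hi := i.isLt
  simp only [mul_apply, jacobiTrudi, elemCoeffMatrix, alternant, of_apply]
  rw [← sum_coeff_elemPolyErase_mul_hfun x k, Fin.sum_univ_eq_sum_range (fun j =>
    (if (i : ℕ) ≤ lam i + j then hfun x (lam i + j - i) else 0) *
      (elemPolyErase x k).coeff (N - 1 - j)) N, ← Finset.sum_range_reflect]
  refine Finset.sum_congr rfl fun a ha => ?_
  have ha := Finset.mem_range.1 ha
  rw [show N - 1 - (N - 1 - a) = a by omega, ite_mul, zero_mul]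
  refine if_congr (by omega) ?_ rfl
  rw [mul_comm, show lam i + (N - 1 - a) - i = lam i + (N - 1) - i - a by omega]

theorem det_jacobiTrudi_zero (x : Fin N → R) : (jacobiTrudi x 0).det = 1 := by
  have htri : (jacobiTrudi x 0).BlockTriangular id := fun i j hij => by
    simp only [jacobiTrudi, of_apply, Pi.zero_apply, zero_add]
    exact if_neg (not_le.2 (Fin.lt_def.1 hij))
  rw [det_of_isUpperTriangular htri]
  exact Finset.prod_eq_one fun i _ => by simp [jacobiTrudi, hfun_zero]

theorem schurAt_mul_det_alternant_zero (x : Fin N → R) (lam : Fin N → ℕ) :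
    schurAt x lam * (alternant x 0).det = (alternant x lam).det := by
  have hlam := congrArg det (jacobiTrudi_mul_elemCoeffMatrix x lam)
  have hzero := congrArg det (jacobiTrudi_mul_elemCoeffMatrix x 0)
  rw [det_mul] at hlam hzero
  rw [det_jacobiTrudi_zero, one_mul] at hzero
  rw [← hzero, schurAt_eq_det_jacobiTrudi, hlam]

theorem det_alternant_zero (x : Fin N → R) :
    (alternant x 0).det = Equiv.Perm.sign (Fin.revPerm : Equiv.Perm (Fin N)) *
      (vandermonde x).det := by
  have h : alternant x 0 = (vandermonde x)ᵀ.submatrix Fin.revPerm id := by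
    ext i k
    simp only [alternant, Pi.zero_apply, zero_add, of_apply, submatrix_apply, transpose_apply,
      vandermonde_apply, id, Fin.revPerm_apply, Fin.val_rev]
    congr 1
    omega
  rw [h, det_permute, det_transpose]

end JacobiTrudi

section Hook

variable {N : ℕ}

/-- The rows of `alternant x (hookP M N j)` carry the exponents `M, N-1, …, j+1, j-1, …, 0`;
`hookPermFun j k` is the row with exponent `k`, where column `j` of the Vandermonde matrix is
read as exponent `M`. -/
def hookPermFun (j k : Fin N) : Fin N :=
  if h₀ : (k : ℕ) = j then ⟨0, k.pos⟩
  else if h : (k : ℕ) < j then ⟨N - 1 - k, by omega⟩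
  else ⟨N - k, by have := k.isLt; omega⟩

theorem hookPermFun_injective (j : Fin N) : Function.Injective (hookPermFun j) := by
  intro a b hab
  simp only [hookPermFun] at hab
  split_ifs at hab <;> simp only [Fin.mk.injEq] at hab <;> omega

noncomputable def hookPerm (j : Fin N) : Equiv.Perm (Fin N) :=
  Equiv.ofBijective _ (hookPermFun_injective j).bijective_of_finite

noncomputable def hookSign (j : Fin N) : ℤˣ :=
  Equiv.Perm.sign (hookPerm j) * Equiv.Perm.sign (Fin.revPerm : Equiv.Perm (Fin N))

theorem hookP_hookPerm_add_sub {M : ℕ} (hMN : N ≤ M) (j k : Fin N) :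
    hookP M N j (hookPerm j k) + (N - 1) - hookPerm j k = if k = j then M else k := by
  show hookP M N j (hookPermFun j k) + (N - 1) - hookPermFun j k = _
  simp only [hookPermFun, hookP]
  have := k.isLt
  split_ifs <;> simp only [Fin.ext_iff, not_true_eq_false] at * <;> omega

end Hook

theorem det_updateCol_vandermonde_pow {R : Type*} [CommRing R] {N M : ℕ} (hMN : N ≤ M)
    (x : Fin N → R) (j : Fin N) :
    ((vandermonde x).updateCol j fun i => x i ^ M).det =
      hookSign j * (schurAt x (hookP M N j) * (vandermonde x).det) := by
  have hperm : ((vandermonde x).updateCol j fun i => x i ^ M)ᵀ =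
      (alternant x (hookP M N j)).submatrix (hookPerm j) id := by
    ext k i
    simp only [transpose_apply, updateCol_apply, submatrix_apply, id, alternant, of_apply,
      vandermonde_apply, hookP_hookPerm_add_sub hMN j k]
    split_ifs <;> rfl
  rw [← det_transpose, hperm, det_permute, ← schurAt_mul_det_alternant_zero,
    det_alternant_zero]
  push_cast [hookSign]
  ring

theorem vandermonde_inv_mulVec_pow_apply {K : Type*} [Field K] {N M : ℕ} (hMN : N ≤ M)
    {x : Fin N → K} (hx : Function.Injective x) (j : Fin N) :
    ((vandermonde x)⁻¹ *ᵥ fun i => x i ^ M) j =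
      hookSign j * schurAt x (hookP M N j) := by
  have hdet : (vandermonde x).det ≠ 0 := det_vandermonde_ne_zero_iff.2 hx
  rw [inv_def, smul_mulVec, ← cramer_eq_adjugate_mulVec, Pi.smul_apply, cramer_apply,
    det_updateCol_vandermonde_pow hMN, Ring.inverse_eq_inv', smul_eq_mul]
  field_simp

theorem of_sum_mul_pow_eq_vandermonde_mul_diagonal {R : Type*} [CommRing R] {N : ℕ}
    (c u v : Fin N → R) :
    (of fun i k : Fin N => ∑ j : Fin N, c j * (u i * v k) ^ (j : ℕ)) =
      vandermonde u * diagonal c * (vandermonde v)ᵀ := by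
  ext i k
  rw [mul_apply]
  simp only [of_apply, mul_diagonal, transpose_apply, vandermonde_apply, mul_pow]
  exact Finset.sum_congr rfl fun j _ => by ring

theorem dotProduct_mul_diagonal_mul_transpose_inv_mulVec {K n : Type*} [Field K] [Fintype n]
    [DecidableEq n] (P Q : Matrix n n K) {c : n → K} (hc : ∀ j, c j ≠ 0) (a b : n → K) :
    b ⬝ᵥ ((P * diagonal c * Qᵀ)⁻¹ *ᵥ a) = ∑ j, (Q⁻¹ *ᵥ b) j * (P⁻¹ *ᵥ a) j / c j := by
  have hdiag : (diagonal c)⁻¹ = diagonal fun j => (c j)⁻¹ :=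
    inv_eq_right_inv (by simp [diagonal_mul_diagonal, hc])
  rw [Matrix.mul_inv_rev, Matrix.mul_inv_rev, hdiag, ← mulVec_mulVec, ← mulVec_mulVec,
    ← transpose_nonsing_inv, dotProduct_mulVec, vecMul_transpose, dotProduct]
  simp only [mulVec_diagonal, div_eq_mul_inv]
  exact Finset.sum_congr rfl fun j _ => by ring

theorem intCast_units_mul_self {R : Type*} [Ring R] (ε : ℤˣ) : (ε : R) * ε = 1 := by
  rw [← Int.cast_mul, ← Units.val_mul, Int.units_mul_self, Units.val_one, Int.cast_one]

theorem rayleigh_rank_one_schur_field_general {F : Type*} [Field F] (N M : ℕ)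
    (hMN : N ≤ M) (c : Fin N → F) (hc : ∀ j, c j ≠ 0) (u v : Fin N → F)
    (hu : Function.Injective u) (hv : Function.Injective v) :
    IsUnit (Matrix.det
        (Matrix.of fun i k : Fin N => ∑ j : Fin N, c j * (u i * v k) ^ (j : ℕ))) ∧
      dotProduct (fun k : Fin N => v k ^ M)
        ((Matrix.of fun i k : Fin N => ∑ j : Fin N, c j * (u i * v k) ^ (j : ℕ))⁻¹.mulVec
          fun i : Fin N => u i ^ M) =
      ∑ j : Fin N, schurAt u (hookP M N (j : ℕ)) * schurAt v (hookP M N (j : ℕ)) / c j := by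
  rw [of_sum_mul_pow_eq_vandermonde_mul_diagonal,
    dotProduct_mul_diagonal_mul_transpose_inv_mulVec _ _ hc]
  refine ⟨?_, Finset.sum_congr rfl fun j _ => ?_⟩
  · simp [det_vandermonde_ne_zero_iff, hu, hv, hc, Finset.prod_ne_zero_iff]
  · rw [vandermonde_inv_mulVec_pow_apply hMN hu, vandermonde_inv_mulVec_pow_apply hMN hv]
    linear_combination schurAt u (hookP M N j) * schurAt v (hookP M N j) / c j *
      intCast_units_mul_self (R := F) (hookSign j)

/-- Field version of the rank-one Rayleigh quotient formula: for `u, v` with pairwise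
distinct coordinates, `h_c[u vᵀ]` is invertible and
`(v^{∘M})ᵀ h_c[u vᵀ]⁻¹ u^{∘M} = Σ_j s_{μ(M,N,j)}(u) s_{μ(M,N,j)}(v) / c_j`. -/
theorem rayleigh_rank_one_schur_field {F : Type*} [Field F] (N M : ℕ) (hN : 1 ≤ N)
    (hMN : N ≤ M) (c : Fin N → F) (hc : ∀ j, c j ≠ 0) (u v : Fin N → F)
    (hu : Function.Injective u) (hv : Function.Injective v) :
    IsUnit (Matrix.det
        (Matrix.of fun i k : Fin N => ∑ j : Fin N, c j * (u i * v k) ^ (j : ℕ))) ∧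
      dotProduct (fun k : Fin N => v k ^ M)
        ((Matrix.of fun i k : Fin N => ∑ j : Fin N, c j * (u i * v k) ^ (j : ℕ))⁻¹.mulVec
          fun i : Fin N => u i ^ M) =
      ∑ j : Fin N, schurAt u (hookP M N (j : ℕ)) * schurAt v (hookP M N (j : ℕ)) / c j :=
  rayleigh_rank_one_schur_field_general N M hMN c hc u v hu hv
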